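/- Let Φ and Ψ be root systems in finite-dimensional real inner product spaces, and let f : Φ ∪ {0} → Ψ ∪ {0} be a morphism of root systems, i.e. a map induced by a real linear map of the ambient spans ℝΦ → ℝΨ. Then for every irreducible component Φ' of Φ with f(Φ') ≠ {0}, there exists a unique irreducible component Ψ' of Ψ such that f(Φ') ⊆ Ψ' ∪ {0}. -/

import Mathlib

open scoped RealInnerProductSpace

/-- A (crystallographic, not necessarily reduced or irreducible) root system
in a real inner product space: a finite set of nonzero vectors spanning the
space, closed under the associated reflections, with integral Cartan numbers. -/
structure IsRootSystem {V : Type*} [NormedAddCommGroup V] [InnerProductSpace ℝ V]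
    (Φ : Set V) : Prop where
  finite : Φ.Finite
  ne_zero : ∀ α ∈ Φ, α ≠ 0
  span_eq_top : Submodule.span ℝ Φ = ⊤
  reflect_mem : ∀ α ∈ Φ, ∀ β ∈ Φ, β - (2 * ⟪β, α⟫ / ⟪α, α⟫) • α ∈ Φ
  crystallographic : ∀ α ∈ Φ, ∀ β ∈ Φ, ∃ n : ℤ, 2 * ⟪β, α⟫ / ⟪α, α⟫ = (n : ℝ)

/-- An irreducible component of a root system: the set of roots connected to a
given root by the equivalence relation generated by non-orthogonality. -/
def IsIrreducibleComponent {V : Type*} [NormedAddCommGroup V] [InnerProductSpace ℝ V]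
    (Φ : Set V) (Φ' : Set V) : Prop :=
  ∃ α ∈ Φ, Φ' =
    {β ∈ Φ | Relation.ReflTransGen (fun x y => x ∈ Φ ∧ y ∈ Φ ∧ ⟪x, y⟫ ≠ 0) α β}

/-!
Let `u, w` be non-orthogonal roots of `Φ` with nonzero images. If `f u ⟂ f w`, the reflected root
`s_u w = w - c • u` (`c ≠ 0`) has image `f w - c • f u`, which is non-orthogonal to both, so `f u`
and `f w` lie in one component of `Ψ`. A chain of roots may also pass through roots killed by `f`:
a killed root `x` next to `δ` is replaced by `s_δ x`, whose image `-c • f δ` is nonzero, and every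
root non-orthogonal to `x` is non-orthogonal to `δ` or to `s_δ x`.
-/

open Relation

section

variable {V W : Type*} [NormedAddCommGroup V] [InnerProductSpace ℝ V]
  [NormedAddCommGroup W] [InnerProductSpace ℝ W]

def RootAdj (Φ : Set V) (x y : V) : Prop := x ∈ Φ ∧ y ∈ Φ ∧ ⟪x, y⟫ ≠ 0

instance (Φ : Set V) : Std.Symm (RootAdj Φ) where
  symm _ _ := fun ⟨hx, hy, h⟩ => ⟨hy, hx, by rwa [real_inner_comm]⟩

def rootComponent (Φ : Set V) (α : V) : Set V :=
  {β ∈ Φ | ReflTransGen (RootAdj Φ) α β}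

theorem rootComponent_eq_of_mem {Φ : Set V} {α β : V} (h : β ∈ rootComponent Φ α) :
    rootComponent Φ β = rootComponent Φ α := by
  have hβα : ReflTransGen (RootAdj Φ) β α := Std.Symm.symm _ _ h.2
  ext γ
  exact and_congr_right fun _ => ⟨h.2.trans, hβα.trans⟩

theorem IsRootSystem.exists_sub_smul_mem {Φ : Set V} (hΦ : IsRootSystem Φ) {u w : V}
    (hu : u ∈ Φ) (hw : w ∈ Φ) (h : ⟪u, w⟫ ≠ 0) : ∃ c : ℝ, c ≠ 0 ∧ w - c • u ∈ Φ := by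
  have hu₀ : u ≠ 0 := by rintro rfl; simp at h
  refine ⟨_, ?_, hΦ.reflect_mem u hu w hw⟩
  rw [real_inner_comm] at h
  exact div_ne_zero (mul_ne_zero two_ne_zero h) (inner_self_ne_zero.2 hu₀)

variable {Φ : Set V} {Ψ : Set W} {f : V →ₗ[ℝ] W} (hf : ∀ α ∈ Φ, f α ∈ Ψ ∪ {0})
include hf

theorem rootAdj_map_of_inner_ne_zero {x y : V} (hx : x ∈ Φ) (hy : y ∈ Φ)
    (h : ⟪f x, f y⟫ ≠ 0) : RootAdj Ψ (f x) (f y) := by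
  have hfx : f x ≠ 0 := by rintro h0; simp [h0] at h
  have hfy : f y ≠ 0 := by rintro h0; simp [h0] at h
  exact ⟨(hf x hx).resolve_right hfx, (hf y hy).resolve_right hfy, h⟩

theorem IsRootSystem.reflTransGen_map_of_rootAdj (hΦ : IsRootSystem Φ) {u w : V}
    (h : RootAdj Φ u w) (hu : f u ≠ 0) (hw : f w ≠ 0) :
    ReflTransGen (RootAdj Ψ) (f u) (f w) := by
  obtain ⟨huΦ, hwΦ, huw⟩ := h
  by_cases h0 : ⟪f u, f w⟫ = 0
  swap
  · exact .single (rootAdj_map_of_inner_ne_zero hf huΦ hwΦ h0)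
  obtain ⟨c, hc, hv⟩ := hΦ.exists_sub_smul_mem huΦ hwΦ huw
  refine .tail (.single (rootAdj_map_of_inner_ne_zero hf huΦ hv ?_))
    (rootAdj_map_of_inner_ne_zero hf hv hwΦ ?_)
  · rw [map_sub, map_smul, inner_sub_right, real_inner_smul_right, h0, zero_sub, neg_ne_zero]
    exact mul_ne_zero hc (inner_self_ne_zero.2 hu)
  · rw [map_sub, map_smul, inner_sub_left, real_inner_smul_left, real_inner_comm, h0, mul_zero,
      sub_zero]
    exact inner_self_ne_zero.2 hw

theorem IsRootSystem.exists_reflection_of_map_eq_zero (hΦ : IsRootSystem Φ) {δ x : V}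
    (h : RootAdj Φ δ x) (hfδ : f δ ≠ 0) (hfx : f x = 0) :
    ∃ x' ∈ Φ, f x' ≠ 0 ∧ RootAdj Ψ (f δ) (f x') ∧
      ∀ y, ⟪x, y⟫ ≠ 0 → ⟪δ, y⟫ ≠ 0 ∨ ⟪x', y⟫ ≠ 0 := by
  obtain ⟨hδΦ, hxΦ, hδx⟩ := h
  obtain ⟨c, hc, hx'⟩ := hΦ.exists_sub_smul_mem hδΦ hxΦ hδx
  have hfx' : f (x - c • δ) = -(c • f δ) := by rw [map_sub, map_smul, hfx, zero_sub]
  refine ⟨_, hx', ?_, rootAdj_map_of_inner_ne_zero hf hδΦ hx' ?_, fun y hxy => ?_⟩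
  · rw [hfx', neg_ne_zero]
    exact smul_ne_zero hc hfδ
  · rw [hfx', inner_neg_right, real_inner_smul_right, neg_ne_zero]
    exact mul_ne_zero hc (inner_self_ne_zero.2 hfδ)
  · by_contra! hy
    rw [inner_sub_left, real_inner_smul_left, hy.1, mul_zero, sub_zero] at hy
    exact hxy hy.2

theorem IsRootSystem.reflTransGen_map (hΦ : IsRootSystem Φ) {α β : V} (hα : α ∈ Φ)
    (h : ReflTransGen (RootAdj Φ) α β) (hfα : f α ≠ 0) (hfβ : f β ≠ 0) :
    ReflTransGen (RootAdj Ψ) (f α) (f β) := by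
  -- Letting the chain start one step before `x` is what allows a killed `x` to be swapped out.
  suffices key : ∀ x, ReflTransGen (RootAdj Φ) x β → ∀ δ ∈ Φ, f δ ≠ 0 →
      ReflGen (RootAdj Φ) δ x → ReflTransGen (RootAdj Ψ) (f δ) (f β) from
    key α h α hα hfα .refl
  intro x hx
  induction hx using ReflTransGen.head_induction_on with
  | refl =>
    rintro δ - hfδ (_ | hδβ)
    · rfl
    · exact hΦ.reflTransGen_map_of_rootAdj hf hδβ hfδ hfβ
  | @head x y hxy _ ih =>
    rintro δ hδΦ hfδ (_ | hδx)
    · exact ih _ hδΦ hfδ (.single hxy)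
    by_cases hfx : f x = 0
    · obtain ⟨x', hx'Φ, hfx', hδx', hx'y⟩ :=
        hΦ.exists_reflection_of_map_eq_zero hf hδx hfδ hfx
      rcases hx'y y hxy.2.2 with hδy | hx'y
      · exact ih δ hδΦ hfδ (.single ⟨hδΦ, hxy.2.1, hδy⟩)
      · exact .head hδx' (ih x' hx'Φ hfx' (.single ⟨hx'Φ, hxy.2.1, hx'y⟩))
    · exact (hΦ.reflTransGen_map_of_rootAdj hf hδx hfδ hfx).trans
        (ih x hxy.1 hfx (.single hxy))

theorem IsRootSystem.image_rootComponent_subset (hΦ : IsRootSystem Φ) {α α₁ : V}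
    (hα₁ : α₁ ∈ rootComponent Φ α) (hfα₁ : f α₁ ≠ 0) :
    f '' rootComponent Φ α ⊆ rootComponent Ψ (f α₁) ∪ {0} := by
  rw [← rootComponent_eq_of_mem hα₁]
  rintro _ ⟨β, ⟨hβΦ, hα₁β⟩, rfl⟩
  by_cases hfβ : f β = 0
  · exact .inr hfβ
  · exact .inl ⟨(hf β hβΦ).resolve_right hfβ, hΦ.reflTransGen_map hf hα₁.1 hα₁β hfα₁ hfβ⟩

end

theorem existsUnique_component_of_rootSystem_morphism_general
    {V W : Type*} [NormedAddCommGroup V] [InnerProductSpace ℝ V]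
    [NormedAddCommGroup W] [InnerProductSpace ℝ W]
    {Φ : Set V} {Ψ : Set W} (hΦ : IsRootSystem Φ)
    (f : V →ₗ[ℝ] W) (hf : ∀ α ∈ Φ, f α ∈ Ψ ∪ {0})
    (Φ' : Set V) (hΦ' : IsIrreducibleComponent Φ Φ') (hnz : ∃ α ∈ Φ', f α ≠ 0) :
    ∃! Ψ' : Set W, IsIrreducibleComponent Ψ Ψ' ∧ f '' Φ' ⊆ Ψ' ∪ {0} := by
  obtain ⟨α, -, rfl⟩ := hΦ'
  obtain ⟨α₁, hα₁, hfα₁⟩ := hnz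
  have hfα₁Ψ : f α₁ ∈ Ψ := (hf α₁ hα₁.1).resolve_right hfα₁
  refine ⟨rootComponent Ψ (f α₁), ⟨⟨f α₁, hfα₁Ψ, rfl⟩,
    hΦ.image_rootComponent_subset hf hα₁ hfα₁⟩, ?_⟩
  rintro _ ⟨⟨β₀, -, rfl⟩, hsub⟩
  have hmem : f α₁ ∈ rootComponent Ψ β₀ :=
    (hsub ⟨α₁, hα₁, rfl⟩).resolve_right hfα₁
  exact (rootComponent_eq_of_mem hmem).symm

/-- For a morphism of root systems `f : Φ ∪ {0} → Ψ ∪ {0}` (induced by a real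
linear map of the ambient spaces) and an irreducible component `Φ'` of `Φ` not
killed by `f`, there is a unique irreducible component `Ψ'` of `Ψ` with
`f(Φ') ⊆ Ψ' ∪ {0}`. -/
theorem existsUnique_component_of_rootSystem_morphism
    {V W : Type*} [NormedAddCommGroup V] [InnerProductSpace ℝ V] [FiniteDimensional ℝ V]
    [NormedAddCommGroup W] [InnerProductSpace ℝ W] [FiniteDimensional ℝ W]
    {Φ : Set V} {Ψ : Set W} (hΦ : IsRootSystem Φ) (hΨ : IsRootSystem Ψ)
    (f : V →ₗ[ℝ] W) (hf : ∀ α ∈ Φ, f α ∈ Ψ ∪ {0})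
    (Φ' : Set V) (hΦ' : IsIrreducibleComponent Φ Φ') (hnz : ∃ α ∈ Φ', f α ≠ 0) :
    ∃! Ψ' : Set W, IsIrreducibleComponent Ψ Ψ' ∧ f '' Φ' ⊆ Ψ' ∪ {0} :=
  existsUnique_component_of_rootSystem_morphism_general hΦ f hf Φ' hΦ' hnz
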